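/- Let A, A' : ℝ² → ℝ^{2×2} be smooth compactly supported fields of symmetric matrices, written A = [[a₁, a₃],[a₃, a₂]] and A' = [[a₁', a₃'],[a₃', a₂']], and define f_A(x,θ) = ⟨θ, A(x)θ⟩ and f_{A'}(x,θ) = ⟨θ, A'(x)θ⟩. Suppose (S f_A)(x,r) = (S f_{A'})(x,r) for all x ∈ ℝ² and r > 0, and suppose in addition that a_j = a_j' identically for some fixed index j ∈ {1,2,3}. Then A(x) = A'(x) for every x ∈ ℝ². -/

import Mathlib

open MeasureTheory Real Matrix

noncomputable section

/-- The point of the unit circle `S¹ ⊂ ℝ²` at angle `t`. -/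
def circ (t : ℝ) : ℝ × ℝ := (Real.cos t, Real.sin t)

/-- The anisotropic spherical Radon transform
`(S f)(x, r) = ∫_{S¹} f(x + rθ, θ) ds(θ)`. -/
def radonS (f : ℝ × ℝ → ℝ × ℝ → ℂ) (x : ℝ × ℝ) (r : ℝ) : ℂ :=
  ∫ t in (0 : ℝ)..(2 * π), f (x + r • circ t) (circ t)

/-- The quadratic-form symbol `f_A(x, θ) = ⟨θ, A(x) θ⟩` associated with a matrix field. -/
def quadF (A : ℝ × ℝ → Matrix (Fin 2) (Fin 2) ℝ) (x : ℝ × ℝ) (v : ℝ × ℝ) : ℂ :=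
  ((![v.1, v.2] ⬝ᵥ (A x).mulVec ![v.1, v.2] : ℝ) : ℂ)

/-!
Write `u = a₁ - a₁'`, `w = a₃ - a₃'`, `v = a₂ - a₂'`. For fixed `x`, the difference of the two
transforms is `S(r) = ∫ (cos² t · u + 2 sin t cos t · w + sin² t · v)(x + r θ(t)) dt`, which
vanishes for `r > 0`. Differentiating twice under the integral sign (the fields are compactly
supported), `S` is `C²` on all of `ℝ`, so `S(0) = 0` and `S''(0) = 0`. With the circle moments
`∫ cos² = ∫ sin² = π`, `∫ cos⁴ = ∫ sin⁴ = 3π/4`, `∫ cos² sin² = π/4`, these read `u + v = 0` and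
`3u₁₁ + u₂₂ + 4w₁₂ + v₁₁ + 3v₂₂ = 0`, i.e. `u₁₁ - u₂₂ + 2w₁₂ = 0`. If `u` or `v` vanishes, then
`w₁₂ = 0`; if `w` vanishes, then `u₁₁ = u₂₂`, i.e. `∂_{e₁+e₂} ∂_{e₁-e₂} u = 0`. A compactly
supported function killed by a product of two directional derivatives vanishes, by integrating
along lines twice.
-/

open Filter Topology Set

section ParametricIntegral

variable {E F G : Type*} [NormedAddCommGroup E] [NormedSpace ℝ E] [NormedAddCommGroup F]
  [NormedSpace ℝ F] [NormedAddCommGroup G] [NormedSpace ℝ G]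

theorem hasDerivAt_integral_clm_apply_comp_add_smul {Q : E → F} (hQ : ContDiff ℝ 1 Q)
    (hQc : HasCompactSupport Q) {L : ℝ → F →L[ℝ] G} (hL : Continuous L) {γ : ℝ → E}
    (hγ : Continuous γ) (x : E) (a b r : ℝ) :
    HasDerivAt (fun r => ∫ t in a..b, L t (Q (x + r • γ t)))
      (∫ t in a..b, L t (fderiv ℝ Q (x + r • γ t) (γ t))) r := by
  have hQ' : Continuous (fderiv ℝ Q) := hQ.continuous_fderiv one_ne_zero
  obtain ⟨C, hC⟩ := hQ'.bounded_above_of_compact_support (hQc.fderiv (𝕜 := ℝ))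
  have hline : ∀ s : ℝ, Continuous fun t => x + s • γ t := fun s =>
    continuous_const.add (hγ.const_smul s)
  have hcont : ∀ s : ℝ, Continuous fun t => L t (Q (x + s • γ t)) := fun s =>
    hL.clm_apply (hQ.continuous.comp (hline s))
  have hcont' : Continuous fun t => L t (fderiv ℝ Q (x + r • γ t) (γ t)) :=
    hL.clm_apply ((hQ'.comp (hline r)).clm_apply hγ)
  have hbound : Continuous fun t => ‖L t‖ * (C * ‖γ t‖) := by fun_prop
  refine (intervalIntegral.hasDerivAt_integral_of_dominated_loc_of_deriv_le (𝕜 := ℝ)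
    (F' := fun s t => L t (fderiv ℝ Q (x + s • γ t) (γ t))) univ_mem
    (.of_forall fun s => (hcont s).aestronglyMeasurable) ((hcont r).intervalIntegrable a b)
    hcont'.aestronglyMeasurable ?_ (hbound.intervalIntegrable a b) ?_).2
  · refine .of_forall fun t _ s _ => ?_
    calc ‖L t (fderiv ℝ Q (x + s • γ t) (γ t))‖
        ≤ ‖L t‖ * (‖fderiv ℝ Q (x + s • γ t)‖ * ‖γ t‖) :=
          (L t).le_opNorm_of_le ((fderiv ℝ Q _).le_opNorm _)
      _ ≤ ‖L t‖ * (C * ‖γ t‖) := by gcongr; exact hC _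
  · refine .of_forall fun t _ s _ => ?_
    have hline : HasDerivAt (fun s : ℝ => x + s • γ t) (γ t) s := by
      simpa using ((hasDerivAt_id s).smul_const (γ t)).const_add x
    exact (L t).hasFDerivAt.comp_hasDerivAt s
      (((hQ.differentiable one_ne_zero _).hasFDerivAt).comp_hasDerivAt s hline)

end ParametricIntegral

theorem ContinuousAt.eq_zero_of_eqOn_Ioi {X : Type*} [TopologicalSpace X] [T2Space X] [Zero X]
    {f : ℝ → X} {a : ℝ} (hf : ContinuousAt f a) (h : EqOn f 0 (Ioi a)) :
    f a = 0 :=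
  tendsto_nhds_unique (hf.tendsto.mono_left nhdsWithin_le_nhds)
    (tendsto_const_nhds.congr' (eventually_nhdsWithin_of_forall fun _ hr => (h hr).symm))

theorem HasDerivAt.eq_zero_of_eqOn_Ioi {F : Type*} [NormedAddCommGroup F] [NormedSpace ℝ F]
    {f : ℝ → F} {f' : F} {a : ℝ} (hf : HasDerivAt f f' a) (h : EqOn f 0 (Ioi a)) :
    f' = 0 := by
  have hzero : HasDerivWithinAt f 0 (Ioi a) a :=
    (hasDerivWithinAt_const a _ 0).congr h (hf.continuousAt.eq_zero_of_eqOn_Ioi h)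
  exact (uniqueDiffWithinAt_Ioi a).eq_deriv _ hf.hasDerivWithinAt hzero

section CompactSupport

variable {E F : Type*} [NormedAddCommGroup E] [NormedSpace ℝ E] [NormedAddCommGroup F]
  [NormedSpace ℝ F] {q : E → F} {a b : E}

theorem HasCompactSupport.eq_zero_of_fderiv_apply_eq_zero (hq : Differentiable ℝ q)
    (hqc : HasCompactSupport q) (ha : a ≠ 0) (h : ∀ y, fderiv ℝ q y a = 0) : q = 0 := by
  funext x
  set g : ℝ → F := fun s => q (x + s • a)
  have hg : ∀ s, HasDerivAt g 0 s := fun s => by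
    have hline : HasDerivAt (fun s : ℝ => x + s • a) a s := by
      simpa using ((hasDerivAt_id s).smul_const a).const_add x
    simpa [g, h, Function.comp_def] using (hq _).hasFDerivAt.comp_hasDerivAt s hline
  have hg_const : g = fun _ => q x := funext fun s => by
    simpa [g] using is_const_of_deriv_eq_zero (fun s => (hg s).differentiableAt)
      (fun s => (hg s).deriv) s 0
  have hline_emb : IsClosedEmbedding fun s : ℝ => x + s • a :=
    (Homeomorph.addLeft x).isClosedEmbedding.comp (isClosedEmbedding_smul_left ha)
  have hg_lim : Tendsto g (cocompact ℝ) (𝓝 0) :=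
    hqc.is_zero_at_infty.comp hline_emb.tendsto_cocompact
  rw [hg_const] at hg_lim
  exact tendsto_nhds_unique tendsto_const_nhds hg_lim

theorem HasCompactSupport.eq_zero_of_fderiv_fderiv_apply_eq_zero (hq : ContDiff ℝ 2 q)
    (hqc : HasCompactSupport q) (ha : a ≠ 0) (hb : b ≠ 0)
    (h : ∀ y, fderiv ℝ (fderiv ℝ q) y a b = 0) : q = 0 := by
  have hq' : Differentiable ℝ (fderiv ℝ q) :=
    (hq.fderiv_right (m := 1) le_rfl).differentiable one_ne_zero
  have hDb : (fun y => fderiv ℝ q y b) = 0 := by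
    refine (hqc.fderiv_apply (𝕜 := ℝ) b).eq_zero_of_fderiv_apply_eq_zero
      (fun y => (hq' y).clm_apply (differentiableAt_const b)) ha fun y => ?_
    simpa [fderiv_clm_apply (hq' y) (differentiableAt_const b)] using h y
  exact hqc.eq_zero_of_fderiv_apply_eq_zero (hq.differentiable two_ne_zero) hb (congrFun hDb)

end CompactSupport

local notation "e₁" => ((1, 0) : ℝ × ℝ)
local notation "e₂" => ((0, 1) : ℝ × ℝ)

theorem HasCompactSupport.eq_zero_of_wave {q : ℝ × ℝ → ℝ} (hq : ContDiff ℝ 2 q)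
    (hqc : HasCompactSupport q)
    (h : ∀ y, fderiv ℝ (fderiv ℝ q) y e₁ e₁ = fderiv ℝ (fderiv ℝ q) y e₂ e₂) : q = 0 := by
  refine hqc.eq_zero_of_fderiv_fderiv_apply_eq_zero hq (a := e₁ + e₂) (b := e₁ - e₂)
    (by simp) (by simp) fun y => ?_
  have hsymm := (hq.contDiffAt (x := y)).isSymmSndFDerivAt (by simp) e₁ e₂
  simp only [map_add, map_sub, _root_.add_apply, h y, hsymm]
  abel

theorem continuous_circ : Continuous circ := by unfold circ; fun_prop

theorem circ_eq_smul_add_smul (t : ℝ) : circ t = cos t • e₁ + sin t • e₂ := by simp [circ]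

theorem fderiv_fderiv_circ_circ {q : ℝ × ℝ → ℝ} {x : ℝ × ℝ} (hq : ContDiffAt ℝ 2 q x) (t : ℝ) :
    fderiv ℝ (fderiv ℝ q) x (circ t) (circ t) = cos t ^ 2 * fderiv ℝ (fderiv ℝ q) x e₁ e₁
      + 2 * (sin t * cos t) * fderiv ℝ (fderiv ℝ q) x e₁ e₂
      + sin t ^ 2 * fderiv ℝ (fderiv ℝ q) x e₂ e₂ := by
  have hsymm := hq.isSymmSndFDerivAt (by simp) e₁ e₂
  simp only [circ_eq_smul_add_smul, map_add, map_smul, _root_.add_apply,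
    _root_.smul_apply, smul_eq_mul, hsymm]
  ring

theorem integral_trig_quartic (a b c d e : ℝ) :
    ∫ t in (0 : ℝ)..2 * π, (a * cos t ^ 4 + b * (sin t * cos t ^ 3) + c * (sin t ^ 2 * cos t ^ 2)
      + d * (sin t ^ 3 * cos t) + e * sin t ^ 4) = 3 * π / 4 * (a + e) + π / 4 * c := by
  have hcos4 : ∫ t in (0 : ℝ)..2 * π, cos t ^ 4 = 3 * π / 4 := by
    rw [integral_cos_pow, integral_cos_sq]
    simp only [cos_two_pi, sin_two_pi, cos_zero, sin_zero]
    ring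
  have hsin4 : ∫ t in (0 : ℝ)..2 * π, sin t ^ 4 = 3 * π / 4 := by
    rw [integral_sin_pow, integral_sin_sq]
    simp only [cos_two_pi, sin_two_pi, cos_zero, sin_zero]
    ring
  have hsin_cos3 : ∫ t in (0 : ℝ)..2 * π, sin t * cos t ^ 3 = 0 := by
    simpa using integral_sin_pow_odd_mul_cos_pow (a := 0) (b := 2 * π) 0 3
  have hsin3_cos : ∫ t in (0 : ℝ)..2 * π, sin t ^ 3 * cos t = 0 := by
    simpa using integral_sin_pow_mul_cos_pow_odd (a := 0) (b := 2 * π) 3 0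
  have hsin2_cos2 : ∫ t in (0 : ℝ)..2 * π, sin t ^ 2 * cos t ^ 2 = π / 4 := by
    have h8 : sin (4 * (2 * π)) = 0 := by
      rw [show (4 : ℝ) * (2 * π) = (8 : ℕ) * π by push_cast; ring, sin_nat_mul_pi]
    rw [integral_sin_sq_mul_cos_sq, h8, mul_zero, sin_zero]
    ring
  have hint : ∀ f : ℝ → ℝ, Continuous f → IntervalIntegrable f volume 0 (2 * π) :=
    fun f hf => hf.intervalIntegrable _ _
  rw [intervalIntegral.integral_add, intervalIntegral.integral_add, intervalIntegral.integral_add,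
    intervalIntegral.integral_add]
  · simp only [intervalIntegral.integral_const_mul, hcos4, hsin4, hsin_cos3, hsin3_cos, hsin2_cos2]
    ring
  all_goals exact hint _ (by fun_prop)

def weightedCircleMean (c : ℝ → ℝ) (q : ℝ × ℝ → ℝ) (x : ℝ × ℝ) (r : ℝ) : ℝ :=
  ∫ t in (0 : ℝ)..2 * π, c t * q (x + r • circ t)

section WeightedCircleMean

variable {c : ℝ → ℝ} {q q' : ℝ × ℝ → ℝ}

theorem weightedCircleMean_zero (c : ℝ → ℝ) (q : ℝ × ℝ → ℝ) (x : ℝ × ℝ) :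
    weightedCircleMean c q x 0 = (∫ t in (0 : ℝ)..2 * π, c t) * q x := by
  simp [weightedCircleMean, intervalIntegral.integral_mul_const]

theorem intervalIntegrable_mul_comp_circ (hc : Continuous c) (hq : Continuous q) (x : ℝ × ℝ)
    (r : ℝ) : IntervalIntegrable (fun t => c t * q (x + r • circ t)) volume 0 (2 * π) :=
  (hc.mul (hq.comp (continuous_const.add (continuous_circ.const_smul r)))).intervalIntegrable _ _

theorem weightedCircleMean_sub (hc : Continuous c) (hq : Continuous q) (hq' : Continuous q')
    (x : ℝ × ℝ) (r : ℝ) :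
    weightedCircleMean c (fun y => q y - q' y) x r
      = weightedCircleMean c q x r - weightedCircleMean c q' x r := by
  simp only [weightedCircleMean, mul_sub]
  exact intervalIntegral.integral_sub (intervalIntegrable_mul_comp_circ hc hq x r)
    (intervalIntegrable_mul_comp_circ hc hq' x r)

theorem hasDerivAt_weightedCircleMean (hq : ContDiff ℝ 1 q) (hqc : HasCompactSupport q)
    (hc : Continuous c) (x : ℝ × ℝ) (r : ℝ) :
    HasDerivAt (weightedCircleMean c q x)
      (∫ t in (0 : ℝ)..2 * π, c t * fderiv ℝ q (x + r • circ t) (circ t)) r :=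
  hasDerivAt_integral_clm_apply_comp_add_smul hq hqc
    (L := fun t => ContinuousLinearMap.mul ℝ ℝ (c t)) (by fun_prop) continuous_circ x _ _ r

theorem hasDerivAt_integral_mul_fderiv_circ (hq : ContDiff ℝ 2 q) (hqc : HasCompactSupport q)
    (hc : Continuous c) (x : ℝ × ℝ) (r : ℝ) :
    HasDerivAt (fun r => ∫ t in (0 : ℝ)..2 * π, c t * fderiv ℝ q (x + r • circ t) (circ t))
      (∫ t in (0 : ℝ)..2 * π, c t * fderiv ℝ (fderiv ℝ q) (x + r • circ t) (circ t) (circ t))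
      r :=
  hasDerivAt_integral_clm_apply_comp_add_smul (hq.fderiv_right (m := 1) le_rfl) (hqc.fderiv (𝕜 := ℝ))
    (L := fun t => (ContinuousLinearMap.mul ℝ ℝ (c t)).comp
      (ContinuousLinearMap.apply ℝ ℝ (circ t)))
    (((ContinuousLinearMap.mul ℝ ℝ).continuous.comp hc).clm_comp
      ((ContinuousLinearMap.apply ℝ ℝ).continuous.comp continuous_circ)) continuous_circ x _ _ r

end WeightedCircleMean

theorem integral_weighted_hessian_circ {u w v : ℝ × ℝ → ℝ} {x : ℝ × ℝ}
    (hu : ContDiffAt ℝ 2 u x) (hw : ContDiffAt ℝ 2 w x) (hv : ContDiffAt ℝ 2 v x) :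
    (∫ t in (0 : ℝ)..2 * π, cos t ^ 2 * fderiv ℝ (fderiv ℝ u) x (circ t) (circ t))
      + (∫ t in (0 : ℝ)..2 * π, 2 * (sin t * cos t) * fderiv ℝ (fderiv ℝ w) x (circ t) (circ t))
      + (∫ t in (0 : ℝ)..2 * π, sin t ^ 2 * fderiv ℝ (fderiv ℝ v) x (circ t) (circ t))
      = π / 4 * (3 * fderiv ℝ (fderiv ℝ u) x e₁ e₁ + fderiv ℝ (fderiv ℝ u) x e₂ e₂
        + 4 * fderiv ℝ (fderiv ℝ w) x e₁ e₂
        + fderiv ℝ (fderiv ℝ v) x e₁ e₁ + 3 * fderiv ℝ (fderiv ℝ v) x e₂ e₂) := by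
  have hint : ∀ (q : ℝ × ℝ → ℝ) (c : ℝ → ℝ), Continuous c → IntervalIntegrable
      (fun t => c t * fderiv ℝ (fderiv ℝ q) x (circ t) (circ t)) volume 0 (2 * π) :=
    fun q c hc => (hc.mul ((continuous_const.clm_apply continuous_circ).clm_apply
      continuous_circ)).intervalIntegrable _ _
  rw [← intervalIntegral.integral_add (hint u _ (by fun_prop)) (hint w _ (by fun_prop)),
    ← intervalIntegral.integral_add ((hint u _ (by fun_prop)).add (hint w _ (by fun_prop)))
      (hint v _ (by fun_prop))]
  refine (intervalIntegral.integral_congr fun t _ => ?_).trans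
    ((integral_trig_quartic (fderiv ℝ (fderiv ℝ u) x e₁ e₁)
      (2 * fderiv ℝ (fderiv ℝ u) x e₁ e₂ + 2 * fderiv ℝ (fderiv ℝ w) x e₁ e₁)
      (fderiv ℝ (fderiv ℝ u) x e₂ e₂ + 4 * fderiv ℝ (fderiv ℝ w) x e₁ e₂
        + fderiv ℝ (fderiv ℝ v) x e₁ e₁)
      (2 * fderiv ℝ (fderiv ℝ w) x e₂ e₂ + 2 * fderiv ℝ (fderiv ℝ v) x e₁ e₂)
      (fderiv ℝ (fderiv ℝ v) x e₂ e₂)).trans ?_)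
  · simp only [fderiv_fderiv_circ_circ hu, fderiv_fderiv_circ_circ hw, fderiv_fderiv_circ_circ hv]
    ring
  · ring

theorem add_eq_zero_and_hessian_relation {u w v : ℝ × ℝ → ℝ} (hu : ContDiff ℝ 2 u)
    (hw : ContDiff ℝ 2 w) (hv : ContDiff ℝ 2 v) (huc : HasCompactSupport u)
    (hwc : HasCompactSupport w) (hvc : HasCompactSupport v)
    (H : ∀ x r, 0 < r → weightedCircleMean (fun t => cos t ^ 2) u x r
      + weightedCircleMean (fun t => 2 * (sin t * cos t)) w x r
      + weightedCircleMean (fun t => sin t ^ 2) v x r = 0) (x : ℝ × ℝ) :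
    u x + v x = 0 ∧
      3 * fderiv ℝ (fderiv ℝ u) x e₁ e₁ + fderiv ℝ (fderiv ℝ u) x e₂ e₂
        + 4 * fderiv ℝ (fderiv ℝ w) x e₁ e₂
        + fderiv ℝ (fderiv ℝ v) x e₁ e₁ + 3 * fderiv ℝ (fderiv ℝ v) x e₂ e₂ = 0 := by
  have hc₁ : Continuous fun t : ℝ => cos t ^ 2 := by fun_prop
  have hc₂ : Continuous fun t : ℝ => 2 * (sin t * cos t) := by fun_prop
  have hc₃ : Continuous fun t : ℝ => sin t ^ 2 := by fun_prop
  have hS : EqOn (fun r => weightedCircleMean (fun t => cos t ^ 2) u x r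
      + weightedCircleMean (fun t => 2 * (sin t * cos t)) w x r
      + weightedCircleMean (fun t => sin t ^ 2) v x r) 0 (Ioi 0) := fun r hr => H x r hr
  have hS' := fun r =>
    ((hasDerivAt_weightedCircleMean (hu.of_le one_le_two) huc hc₁ x r).add
      (hasDerivAt_weightedCircleMean (hw.of_le one_le_two) hwc hc₂ x r)).add
      (hasDerivAt_weightedCircleMean (hv.of_le one_le_two) hvc hc₃ x r)
  have hS'' := ((hasDerivAt_integral_mul_fderiv_circ hu huc hc₁ x 0).add
      (hasDerivAt_integral_mul_fderiv_circ hw hwc hc₂ x 0)).add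
      (hasDerivAt_integral_mul_fderiv_circ hv hvc hc₃ x 0)
  constructor
  · have hS0 := (hS' 0).continuousAt.eq_zero_of_eqOn_Ioi hS
    simp only [Pi.add_apply, weightedCircleMean_zero, integral_cos_sq, integral_sin_sq,
      intervalIntegral.integral_const_mul, integral_sin_mul_cos₁, cos_two_pi, sin_two_pi, cos_zero,
      sin_zero] at hS0
    have : π * (u x + v x) = 0 := by linear_combination hS0
    exact (mul_eq_zero.1 this).resolve_left pi_ne_zero
  · have hS''0 := hS''.eq_zero_of_eqOn_Ioi fun r hr =>
      (hS' r).eq_zero_of_eqOn_Ioi (hS.mono (Ioi_subset_Ioi hr.le))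
    simp only [zero_smul, add_zero,
      integral_weighted_hessian_circ hu.contDiffAt hw.contDiffAt hv.contDiffAt] at hS''0
    exact (mul_eq_zero.1 hS''0).resolve_left (by positivity)

theorem eq_neg_and_wave_relation {u w v : ℝ × ℝ → ℝ} (hu : ContDiff ℝ 2 u)
    (hw : ContDiff ℝ 2 w) (hv : ContDiff ℝ 2 v) (huc : HasCompactSupport u)
    (hwc : HasCompactSupport w) (hvc : HasCompactSupport v)
    (H : ∀ x r, 0 < r → weightedCircleMean (fun t => cos t ^ 2) u x r
      + weightedCircleMean (fun t => 2 * (sin t * cos t)) w x r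
      + weightedCircleMean (fun t => sin t ^ 2) v x r = 0) :
    v = -u ∧ ∀ x, fderiv ℝ (fderiv ℝ u) x e₁ e₁ - fderiv ℝ (fderiv ℝ u) x e₂ e₂
      + 2 * fderiv ℝ (fderiv ℝ w) x e₁ e₂ = 0 := by
  have hrel := add_eq_zero_and_hessian_relation hu hw hv huc hwc hvc H
  have hvu : v = -u := funext fun x => eq_neg_of_add_eq_zero_right (hrel x).1
  refine ⟨hvu, fun x => ?_⟩
  have h := (hrel x).2
  rw [hvu, show fderiv ℝ (-u) = -fderiv ℝ u from funext fun _ => fderiv_neg, fderiv_neg] at h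
  simp only [_root_.neg_apply] at h
  linarith

theorem eq_zero_of_wave_relation {u w v : ℝ × ℝ → ℝ} (hu : ContDiff ℝ 2 u) (hw : ContDiff ℝ 2 w)
    (huc : HasCompactSupport u) (hwc : HasCompactSupport w) (hvu : v = -u)
    (hwave : ∀ x, fderiv ℝ (fderiv ℝ u) x e₁ e₁ - fderiv ℝ (fderiv ℝ u) x e₂ e₂
      + 2 * fderiv ℝ (fderiv ℝ w) x e₁ e₂ = 0)
    (hzero : u = 0 ∨ v = 0 ∨ w = 0) : u = 0 ∧ w = 0 ∧ v = 0 := by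
  have hw_of_hu : u = 0 → w = 0 := fun hu0 =>
    hwc.eq_zero_of_fderiv_fderiv_apply_eq_zero hw (a := e₁) (b := e₂) (by simp) (by simp)
      fun y => by simpa [hu0] using hwave y
  have hu_of_hw : w = 0 → u = 0 := fun hw0 =>
    huc.eq_zero_of_wave hu fun y => by simpa [hw0, sub_eq_zero] using hwave y
  obtain ⟨hu0, hw0⟩ : u = 0 ∧ w = 0 := by
    rcases hzero with hu0 | hv0 | hw0
    · exact ⟨hu0, hw_of_hu hu0⟩
    · have hu0 : u = 0 := neg_eq_zero.1 (hvu.symm.trans hv0)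
      exact ⟨hu0, hw_of_hu hu0⟩
    · exact ⟨hu_of_hw hw0, hw0⟩
  exact ⟨hu0, hw0, by rw [hvu, hu0, neg_zero]⟩

theorem Matrix.IsSymm.ext_fin_two {α : Type*} {M N : Matrix (Fin 2) (Fin 2) α} (hM : M.IsSymm)
    (hN : N.IsSymm) (h₀₀ : M 0 0 = N 0 0) (h₀₁ : M 0 1 = N 0 1) (h₁₁ : M 1 1 = N 1 1) :
    M = N := by
  ext i j
  fin_cases i <;> fin_cases j
  exacts [h₀₀, h₀₁, by simpa [hM.apply, hN.apply] using h₀₁, h₁₁]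

theorem quadF_circ {A : ℝ × ℝ → Matrix (Fin 2) (Fin 2) ℝ} {y : ℝ × ℝ} (hA : (A y).IsSymm)
    (t : ℝ) : quadF A y (circ t)
      = ((cos t ^ 2 * A y 0 0 + 2 * (sin t * cos t) * A y 0 1 + sin t ^ 2 * A y 1 1 : ℝ) : ℂ) := by
  simp only [quadF, circ, dotProduct, mulVec, Fin.sum_univ_two, cons_val_zero, cons_val_one,
    hA.apply 0 1]
  push_cast
  ring

theorem radonS_quadF {A : ℝ × ℝ → Matrix (Fin 2) (Fin 2) ℝ}
    (hA : ∀ i j, Continuous fun x => A x i j) (hAs : ∀ x, (A x).IsSymm) (x : ℝ × ℝ) (r : ℝ) :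
    radonS (quadF A) x r = ((weightedCircleMean (fun t => cos t ^ 2) (A · 0 0) x r
      + weightedCircleMean (fun t => 2 * (sin t * cos t)) (A · 0 1) x r
      + weightedCircleMean (fun t => sin t ^ 2) (A · 1 1) x r : ℝ) : ℂ) := by
  have hint : ∀ i j (c : ℝ → ℝ), Continuous c →
      IntervalIntegrable (fun t => c t * A (x + r • circ t) i j) volume 0 (2 * π) :=
    fun i j c hc => intervalIntegrable_mul_comp_circ hc (hA i j) x r
  simp only [radonS, quadF_circ (hAs _), intervalIntegral.integral_ofReal, weightedCircleMean]
  rw [← intervalIntegral.integral_add (hint 0 0 _ (by fun_prop)) (hint 0 1 _ (by fun_prop)),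
    ← intervalIntegral.integral_add ((hint 0 0 _ (by fun_prop)).add (hint 0 1 _ (by fun_prop)))
      (hint 1 1 _ (by fun_prop))]

theorem radonS_quadF_sub_radonS_quadF {A A' : ℝ × ℝ → Matrix (Fin 2) (Fin 2) ℝ}
    (hA : ∀ i j, Continuous fun x => A x i j) (hA' : ∀ i j, Continuous fun x => A' x i j)
    (hAs : ∀ x, (A x).IsSymm) (hA's : ∀ x, (A' x).IsSymm) (x : ℝ × ℝ) (r : ℝ) :
    radonS (quadF A) x r - radonS (quadF A') x r
      = ((weightedCircleMean (fun t => cos t ^ 2) (fun y => A y 0 0 - A' y 0 0) x r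
        + weightedCircleMean (fun t => 2 * (sin t * cos t)) (fun y => A y 0 1 - A' y 0 1) x r
        + weightedCircleMean (fun t => sin t ^ 2) (fun y => A y 1 1 - A' y 1 1) x r : ℝ) : ℂ) := by
  rw [radonS_quadF hA hAs, radonS_quadF hA' hA's]
  rw [weightedCircleMean_sub, weightedCircleMean_sub, weightedCircleMean_sub]
  · push_cast
    ring
  all_goals first | exact hA _ _ | exact hA' _ _ | fun_prop

/-- **Recovery of a symmetric matrix field from the anisotropic spherical Radon transform
of its quadratic form when one entry is known.** If `A = [[a₁,a₃],[a₃,a₂]]` and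
`A' = [[a₁',a₃'],[a₃',a₂']]` are smooth compactly supported symmetric matrix fields whose
quadratic forms have equal anisotropic spherical Radon transforms, and if for some fixed
`j ∈ {1,2,3}` the entries `a_j` and `a_j'` coincide identically, then `A = A'` everywhere. -/
theorem radon_determines_matrix_given_one_entry
    (A A' : ℝ × ℝ → Matrix (Fin 2) (Fin 2) ℝ)
    (hA : ∀ i j, ContDiff ℝ (⊤ : ℕ∞) (fun x => A x i j))
    (hA' : ∀ i j, ContDiff ℝ (⊤ : ℕ∞) (fun x => A' x i j))
    (hAc : ∀ i j, HasCompactSupport (fun x => A x i j))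
    (hA'c : ∀ i j, HasCompactSupport (fun x => A' x i j))
    (hAs : ∀ x, (A x).IsSymm) (hA's : ∀ x, (A' x).IsSymm)
    (h : ∀ x : ℝ × ℝ, ∀ r : ℝ, 0 < r → radonS (quadF A) x r = radonS (quadF A') x r)
    (hentry : (∀ x, A x 0 0 = A' x 0 0) ∨ (∀ x, A x 1 1 = A' x 1 1) ∨
      (∀ x, A x 0 1 = A' x 0 1)) :
    ∀ x : ℝ × ℝ, A x = A' x := by
  have hsmooth : ∀ i j, ContDiff ℝ 2 fun y => A y i j - A' y i j := fun i j =>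
    ((hA i j).sub (hA' i j)).of_le (WithTop.coe_le_coe.2 le_top)
  have hsupp : ∀ i j, HasCompactSupport fun y => A y i j - A' y i j := fun i j =>
    (hAc i j).sub (hA'c i j)
  have hzero : ∀ i j, (∀ x, A x i j = A' x i j) → (fun y => A y i j - A' y i j) = 0 :=
    fun i j hij => funext fun y => sub_eq_zero.2 (hij y)
  have hmeans := fun x r hr => Complex.ofReal_eq_zero.1 <|
    (radonS_quadF_sub_radonS_quadF (fun i j => (hA i j).continuous)
      (fun i j => (hA' i j).continuous) hAs hA's x r).symm.trans (sub_eq_zero.2 (h x r hr))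
  obtain ⟨hvu, hwave⟩ := eq_neg_and_wave_relation (hsmooth 0 0) (hsmooth 0 1) (hsmooth 1 1)
    (hsupp 0 0) (hsupp 0 1) (hsupp 1 1) hmeans
  obtain ⟨h₀₀, h₀₁, h₁₁⟩ := eq_zero_of_wave_relation (hsmooth 0 0) (hsmooth 0 1) (hsupp 0 0)
    (hsupp 0 1) hvu hwave (hentry.imp (hzero 0 0) (Or.imp (hzero 1 1) (hzero 0 1)))
  intro x
  exact (hAs x).ext_fin_two (hA's x) (sub_eq_zero.1 (congrFun h₀₀ x))
    (sub_eq_zero.1 (congrFun h₀₁ x)) (sub_eq_zero.1 (congrFun h₁₁ x))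

end
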